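/- arXiv:1810.06341 — 2 statements merged into one kernel-verified Lean document; each statement's English description precedes it below -/
import Mathlib

section
/- Let p be prime and X, Y ⊆ F_p with |X|·|Y| > 2p. Then 8(X·Y) = F_p, i.e. every element of F_p can be written as a sum of 8 products x₁y₁ + x₂y₂ + … + x₈y₈ with xᵢ ∈ X, yᵢ ∈ Y. -/
/-!
Split `X` into its symmetric part `X ∩ -X` and the rest; one of the two, say `U`, still has
`|U| |Y| > |K|`. Averaging the additive energies `E[U, ξ • Y]` over `ξ ≠ 0` (a quadruple with
`u ≠ u'` solves `u + ξ v = u' + ξ v'` for at most one `ξ`) and Cauchy–Schwarz give some `ξ ≠ 0`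
with `|U + ξ • Y|` and `|U - ξ • Y|` both larger than `|K| / 2`.

Because `|U| |Y| > |K|`, the map `(u, y) ↦ u + ξ y` is not injective on `U × Y`; in the
symmetric case this writes `c ξ` as `u₁ - u₂` with `c = v₂ - v₁ ≠ 0`. Otherwise `U + ξ • Y` meets
its negative, which writes `-c ξ` as `u₁ + u₂` with `c = v₁ + v₂ ≠ 0`. Either way the dilate
`c • (U ± ξ • Y)`, of the same size, consists of sums of four products `x y`, and two subsets
of `K` with more than `|K| / 2` elements each add up to all of `K`.
-/

open Finset
open scoped Pointwise Combinatorics.Additive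

-- `2(q-1)(ab)² - (q+1)((q-1)ab + (a²-a)(b²-b)) = ab((q-3)(ab-q-1) + (q+1)(a+b-3))`
lemma add_one_mul_energy_bound_le {q a b : ℕ} (hq : 2 ≤ q) (ha : a ≤ q) (hb : b ≤ q)
    (hab : q < a * b) :
    (q + 1) * ((q - 1) * (a * b) + (a * a - a) * (b * b - b)) ≤ 2 * (q - 1) * (a * b) ^ 2 := by
  rcases hq.eq_or_lt with rfl | hq3
  · obtain rfl : a = 2 := by interval_cases a <;> omega
    obtain rfl : b = 2 := by interval_cases b <;> omega
    norm_num
  have ha1 : 1 ≤ a := Nat.pos_of_ne_zero (by rintro rfl; simp at hab)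
  have hb1 : 1 ≤ b := Nat.pos_of_ne_zero (by rintro rfl; simp at hab)
  have hab3 : 3 ≤ a + b := by
    by_contra h
    obtain ⟨rfl, rfl⟩ : a = 1 ∧ b = 1 := by omega
    omega
  zify [hq.trans' one_le_two, Nat.le_mul_self a, Nat.le_mul_self b] at *
  have hab' : (0 : ℤ) ≤ a * b := by positivity
  nlinarith [mul_nonneg hab' (mul_nonneg (by linarith : (0 : ℤ) ≤ q - 3)
      (by linarith : (0 : ℤ) ≤ a * b - q - 1)),
    mul_nonneg hab' (mul_nonneg (by linarith : (0 : ℤ) ≤ q + 1)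
      (by linarith : (0 : ℤ) ≤ a + b - 3))]

namespace Finset

lemma addEnergy_neg_right {α : Type*} [AddCommGroup α] [DecidableEq α] (s t : Finset α) :
    E[s, -t] = E[s, t] := by
  refine card_nbij' (fun x => (x.1, (-x.2.2, -x.2.1))) (fun x => (x.1, (-x.2.2, -x.2.1)))
    ?_ ?_ (fun _ _ => by simp) (fun _ _ => by simp)
  all_goals
    rintro ⟨⟨a₁, a₂⟩, b₁, b₂⟩
    simp only [coe_filter, mem_product, mem_neg', neg_neg, Set.mem_ofPred_eq]
    rintro ⟨⟨⟨ha₁, ha₂⟩, hb₁, hb₂⟩, h⟩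
    refine ⟨⟨⟨ha₁, ha₂⟩, hb₂, hb₁⟩, ?_⟩
    rwa [← sub_eq_add_neg, ← sub_eq_add_neg, sub_eq_sub_iff_add_eq_add]

lemma lt_two_mul_card_add_of_addEnergy_le {α : Type*} [Add α] [Fintype α] [DecidableEq α]
    (s t : Finset α) (hst : Fintype.card α < #s * #t)
    (hE : (Fintype.card α - 1) * E[s, t] ≤
      (Fintype.card α - 1) * (#s * #t) + (#s * #s - #s) * (#t * #t - #t)) :
    Fintype.card α < 2 * #(s + t) := by
  set q := Fintype.card α
  have hs : #s ≤ q := card_le_univ s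
  have ht : #t ≤ q := card_le_univ t
  have hq : 2 ≤ q := by nlinarith
  have hB : 0 < (q - 1) * (#s * #t) := Nat.mul_pos (by omega) (by omega)
  have hCS : #s ^ 2 * #t ^ 2 ≤ #(s + t) * E[s, t] := le_card_add_mul_addEnergy s t
  suffices (q + 1) * ((q - 1) * (#s * #t) + (#s * #s - #s) * (#t * #t - #t)) ≤
      2 * #(s + t) * ((q - 1) * (#s * #t) + (#s * #s - #s) * (#t * #t - #t)) from
    Nat.le_of_mul_le_mul_right this (by omega)
  calc _ ≤ 2 * (q - 1) * (#s * #t) ^ 2 := add_one_mul_energy_bound_le hq hs ht hst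
    _ ≤ 2 * (q - 1) * (#(s + t) * E[s, t]) := by rw [mul_pow]; gcongr
    _ = 2 * #(s + t) * ((q - 1) * E[s, t]) := by ring
    _ ≤ _ := by gcongr

lemma add_eq_univ_of_card_lt_card_add_card {α : Type*} [AddGroup α] [Fintype α] [DecidableEq α]
    {s t : Finset α} (h : Fintype.card α < #s + #t) : s + t = univ := by
  refine eq_univ_of_forall fun z => ?_
  have ht : #(t.image (z - ·)) = #t := card_image_of_injective _ sub_right_injective
  obtain ⟨a, ha⟩ := inter_nonempty_of_card_lt_card_add_card (subset_univ s)
    (subset_univ (t.image (z - ·))) (by rwa [ht, card_univ])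
  obtain ⟨has, hat⟩ := mem_inter.1 ha
  obtain ⟨b, hb, rfl⟩ := mem_image.1 hat
  exact mem_add.2 ⟨z - b, has, b, hb, sub_add_cancel z b⟩

lemma add_add_add_mem_four_nsmul {α : Type*} [AddMonoid α] [DecidableEq α] {s : Finset α}
    {a b c d : α} (ha : a ∈ s) (hb : b ∈ s) (hc : c ∈ s) (hd : d ∈ s) :
    a + b + c + d ∈ 4 • s := by
  rw [show 4 • s = s + s + s + s by simp only [succ_nsmul, zero_nsmul, zero_add]]
  exact add_mem_add (add_mem_add (add_mem_add ha hb) hc) hd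

lemma exists_fin_sum_mul_eq_of_mem_nsmul_mul {R : Type*} [AddCommMonoid R] [Mul R]
    [DecidableEq R] {X Y : Finset R} {n : ℕ} {z : R} (hz : z ∈ n • (X * Y)) :
    ∃ x y : Fin n → R, (∀ i, x i ∈ X) ∧ (∀ i, y i ∈ Y) ∧ z = ∑ i, x i * y i := by
  obtain ⟨f, rfl⟩ := mem_nsmul.1 hz
  choose x hx y hy hxy using fun i => mem_mul.1 (f i).2
  exact ⟨x, y, hx, hy, by simp [List.sum_ofFn, hxy]⟩

section Field

variable {K : Type*} [Field K] [DecidableEq K]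

lemma addEnergy_smul_finset_eq_card_filter {ξ : K} (hξ : ξ ≠ 0) (U V : Finset K) :
    E[U, ξ • V] = #{q ∈ (U ×ˢ U) ×ˢ (V ×ˢ V) | q.1.1 + ξ * q.2.1 = q.1.2 + ξ * q.2.2} := by
  refine card_nbij' (fun q => (q.1, (ξ⁻¹ * q.2.1, ξ⁻¹ * q.2.2)))
    (fun q => (q.1, (ξ * q.2.1, ξ * q.2.2))) ?_ ?_ (fun _ _ => by simp [hξ])
    (fun _ _ => by simp [hξ])
  all_goals
    rintro ⟨⟨a₁, a₂⟩, b₁, b₂⟩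
    simp only [coe_filter, mem_product, ← inv_smul_mem_iff₀ hξ, smul_eq_mul, Set.mem_ofPred_eq,
      inv_mul_cancel_left₀ hξ, mul_inv_cancel_left₀ hξ]
    exact id

lemma card_filter_add_mul_eq_add_mul_le {ξ : K} (hξ : ξ ≠ 0) (U V : Finset K) :
    #{q ∈ (U ×ˢ U) ×ˢ (V ×ˢ V) | q.1.1 + ξ * q.2.1 = q.1.2 + ξ * q.2.2} ≤
      #U * #V + #{q ∈ U.offDiag ×ˢ V.offDiag | (q.1.1 - q.1.2) / (q.2.2 - q.2.1) = ξ} := by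
  calc _ ≤ #(U.diag ×ˢ V.diag ∪
          {q ∈ U.offDiag ×ˢ V.offDiag | (q.1.1 - q.1.2) / (q.2.2 - q.2.1) = ξ}) := by
        refine card_le_card fun ⟨⟨u₁, u₂⟩, v₁, v₂⟩ => ?_
        simp only [mem_filter, mem_product, mem_union, mem_diag, mem_offDiag]
        rintro ⟨⟨⟨hu₁, hu₂⟩, hv₁, hv₂⟩, h⟩
        by_cases hu : u₁ = u₂
        · subst hu
          exact .inl ⟨⟨hu₁, rfl⟩, hv₁, mul_left_cancel₀ hξ (add_left_cancel h)⟩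
        · have hv : v₂ - v₁ ≠ 0 := fun hv => hu (by linear_combination h + ξ * hv)
          refine .inr ⟨⟨⟨hu₁, hu₂, hu⟩, hv₁, hv₂, fun h' => hv (by rw [h', sub_self])⟩, ?_⟩
          rw [div_eq_iff hv]
          linear_combination h
    _ ≤ _ := by grw [card_union_le, card_product, diag_card, diag_card]

variable [Fintype K]

lemma sum_addEnergy_smul_finset_le (U V : Finset K) :
    ∑ ξ ∈ univ.erase (0 : K), E[U, ξ • V] ≤
      (Fintype.card K - 1) * (#U * #V) + (#U * #U - #U) * (#V * #V - #V) := by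
  calc ∑ ξ ∈ univ.erase (0 : K), E[U, ξ • V]
      ≤ ∑ ξ ∈ univ.erase (0 : K), (#U * #V +
          #{q ∈ U.offDiag ×ˢ V.offDiag | (q.1.1 - q.1.2) / (q.2.2 - q.2.1) = ξ}) := by
        refine sum_le_sum fun ξ hξ => ?_
        rw [addEnergy_smul_finset_eq_card_filter (ne_of_mem_erase hξ)]
        exact card_filter_add_mul_eq_add_mul_le (ne_of_mem_erase hξ) U V
    _ ≤ _ := by
        rw [sum_add_distrib, sum_const, card_erase_of_mem (mem_univ _), card_univ, smul_eq_mul,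
          sum_card_fiberwise_eq_card_filter, ← offDiag_card, ← offDiag_card,
          ← card_product U.offDiag]
        exact Nat.add_le_add_left (card_filter_le _ _) _

lemma exists_addEnergy_smul_finset_le (U V : Finset K) : ∃ ξ : K, ξ ≠ 0 ∧
    (Fintype.card K - 1) * E[U, ξ • V] ≤
      (Fintype.card K - 1) * (#U * #V) + (#U * #U - #U) * (#V * #V - #V) := by
  obtain ⟨ξ, hξ, h⟩ := exists_le_of_sum_le (s := univ.erase (0 : K))
    ⟨1, mem_erase.2 ⟨one_ne_zero, mem_univ _⟩⟩
    (f := fun ξ => (Fintype.card K - 1) * E[U, ξ • V])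
    (g := fun _ => (Fintype.card K - 1) * (#U * #V) + (#U * #U - #U) * (#V * #V - #V)) (by
      rw [← mul_sum, sum_const, card_erase_of_mem (mem_univ _), card_univ, smul_eq_mul]
      exact Nat.mul_le_mul_left _ (sum_addEnergy_smul_finset_le U V))
  exact ⟨ξ, ne_of_mem_erase hξ, h⟩

theorem exists_lt_two_mul_card_add_smul_and_card_sub_smul {U V : Finset K}
    (h : Fintype.card K < #U * #V) : ∃ ξ : K, ξ ≠ 0 ∧
      Fintype.card K < 2 * #(U + ξ • V) ∧ Fintype.card K < 2 * #(U - ξ • V) := by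
  obtain ⟨ξ, hξ, hE⟩ := exists_addEnergy_smul_finset_le U V
  have hV : #(ξ • V) = #V := card_smul_finset₀ hξ V
  refine ⟨ξ, hξ, ?_, ?_⟩
  · apply lt_two_mul_card_add_of_addEnergy_le <;> rwa [hV]
  · rw [sub_eq_add_neg]
    apply lt_two_mul_card_add_of_addEnergy_le
    · rwa [card_neg, hV]
    · rwa [card_neg, hV, addEnergy_neg_right]

lemma exists_large_subset_four_nsmul_mul_of_inter_neg {X Y : Finset K}
    (h : Fintype.card K < #(X ∩ -X) * #Y) :
    ∃ W : Finset K, Fintype.card K < 2 * #W ∧ W ⊆ 4 • (X * Y) := by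
  obtain ⟨ξ, hξ, hlarge, -⟩ := exists_lt_two_mul_card_add_smul_and_card_sub_smul h
  obtain ⟨⟨u₁, v₁⟩, h₁, ⟨u₂, v₂⟩, h₂, hne, heq⟩ :=
    exists_ne_map_eq_of_card_lt_of_maps_to (s := (X ∩ -X) ×ˢ Y) (t := univ)
      (f := fun w => w.1 + ξ * w.2) (by rwa [card_product, card_univ]) (fun _ _ => mem_univ _)
  simp only [mem_product, mem_inter, mem_neg'] at h₁ h₂
  have hc : v₂ - v₁ ≠ 0 := by
    intro hv
    refine hne (Prod.ext ?_ (sub_eq_zero.1 hv).symm)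
    linear_combination heq + ξ * hv
  refine ⟨(v₂ - v₁) • (X ∩ -X + ξ • Y), by rwa [card_smul_finset₀ hc], fun w hw => ?_⟩
  simp only [mem_smul_finset, mem_add, mem_inter, mem_neg', smul_eq_mul] at hw
  obtain ⟨_, ⟨u, hu, _, ⟨y, hy, rfl⟩, rfl⟩, rfl⟩ := hw
  rw [show (v₂ - v₁) * (u + ξ * y) = u * v₂ + -u * v₁ + u₁ * y + -u₂ * y by
    linear_combination -y * heq]
  exact add_add_add_mem_four_nsmul (mul_mem_mul hu.1 h₂.2) (mul_mem_mul hu.2 h₁.2)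
    (mul_mem_mul h₁.1.1 hy) (mul_mem_mul h₂.1.2 hy)

lemma exists_large_subset_four_nsmul_mul_of_sdiff_neg {X Y : Finset K}
    (h : Fintype.card K < #(X \ -X) * #Y) :
    ∃ W : Finset K, Fintype.card K < 2 * #W ∧ W ⊆ 4 • (X * Y) := by
  obtain ⟨ξ, hξ, hadd, hsub⟩ := exists_lt_two_mul_card_add_smul_and_card_sub_smul h
  obtain ⟨z, hz⟩ := inter_nonempty_of_card_lt_card_add_card (subset_univ (X \ -X + ξ • Y))
    (subset_univ (-(X \ -X + ξ • Y))) (by rw [card_neg, card_univ]; omega)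
  simp only [mem_inter, mem_neg', mem_add, mem_sdiff, mem_smul_finset, smul_eq_mul] at hz
  obtain ⟨⟨u₁, hu₁, _, ⟨v₁, hv₁, rfl⟩, rfl⟩, ⟨u₂, hu₂, _, ⟨v₂, hv₂, rfl⟩, heq⟩⟩ := hz
  have hc : v₁ + v₂ ≠ 0 := by
    intro hv
    refine hu₂.2 ?_
    rw [show -u₂ = u₁ by linear_combination -heq + ξ * hv]
    exact hu₁.1
  refine ⟨(v₁ + v₂) • (X \ -X - ξ • Y), by rwa [card_smul_finset₀ hc], fun w hw => ?_⟩
  simp only [mem_smul_finset, mem_sub, mem_sdiff, mem_neg', smul_eq_mul] at hw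
  obtain ⟨_, ⟨u, hu, _, ⟨y, hy, rfl⟩, rfl⟩, rfl⟩ := hw
  rw [show (v₁ + v₂) * (u - ξ * y) = u * v₁ + u * v₂ + u₁ * y + u₂ * y by
    linear_combination -y * heq]
  exact add_add_add_mem_four_nsmul (mul_mem_mul hu.1 hv₁) (mul_mem_mul hu.1 hv₂)
    (mul_mem_mul hu₁.1 hy) (mul_mem_mul hu₂.1 hy)

theorem eight_nsmul_mul_eq_univ {X Y : Finset K} (h : 2 * Fintype.card K < #X * #Y) :
    8 • (X * Y) = univ := by
  obtain ⟨W, hW, hWXY⟩ : ∃ W : Finset K, Fintype.card K < 2 * #W ∧ W ⊆ 4 • (X * Y) := by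
    by_cases hsym : Fintype.card K < #(X ∩ -X) * #Y
    · exact exists_large_subset_four_nsmul_mul_of_inter_neg hsym
    · refine exists_large_subset_four_nsmul_mul_of_sdiff_neg ?_
      have := card_inter_add_card_sdiff X (-X)
      nlinarith
  refine univ_subset_iff.1 ?_
  calc univ = W + W := (add_eq_univ_of_card_lt_card_add_card (by omega)).symm
    _ ⊆ 4 • (X * Y) + 4 • (X * Y) := add_subset_add hWXY hWXY
    _ = 8 • (X * Y) := (add_nsmul _ 4 4).symm

end Field

end Finset

/-- Glibichuk's lemma: if `X, Y ⊆ 𝔽_p` with `|X||Y| > 2p`, then every element of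
`𝔽_p` is a sum of 8 products `x₁y₁ + ⋯ + x₈y₈`, `xᵢ ∈ X`, `yᵢ ∈ Y`. -/
theorem glibichuk_eight_products (p : ℕ) (hp : p.Prime) (X Y : Finset (ZMod p))
    (hXY : 2 * p < X.card * Y.card) (lam : ZMod p) :
    ∃ x y : Fin 8 → ZMod p, (∀ i, x i ∈ X) ∧ (∀ i, y i ∈ Y) ∧
      lam = ∑ i : Fin 8, x i * y i := by
  have := Fact.mk hp
  have h8 : 8 • (X * Y) = univ := eight_nsmul_mul_eq_univ (by rwa [ZMod.card])
  exact exists_fin_sum_mul_eq_of_mem_nsmul_mul (h8 ▸ mem_univ lam)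
end

section
/- Let p be prime, g of multiplicative order T mod p, a coprime to p, and N, M intervals of consecutive integers with complex coefficients α_n, β_m satisfying |α_n|, |β_m| ≤ 1. Then |Σ_{n∈N} Σ_{m∈M} α_n β_m e_p(a n g^m)|² ≤ C · M N · Σ_{0 ≤ n ≤ N} | Σ_{m∈M} e_p(a n g^m) | for an absolute constant C. -/
open Finset

/-!
Pulling out `β` and applying Cauchy–Schwarz in `m` bounds the square by `M` times
`Σ_m |Σ_n α_n e_p(a n g^m)|²`. Expanding, `e_p(x) · conj e_p(y) = e_p(x - y)` turns this into
`Σ_{n, n'} |Σ_m e_p(a (n - n') g^m)|`. Every difference `k = n - n'` lies in `[-N, N]` and occurs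
at most `N` times, and `k ↦ -k` conjugates the inner sum, so the constant `C = 2` works.
-/

/-- The additive character `e_p(x) = e^{2πix/p}` on `ZMod p`. -/
noncomputable def ep (p : ℕ) (x : ZMod p) : ℂ :=
  Complex.exp (2 * Real.pi * Complex.I * (x.val : ℂ) / p)

open ComplexConjugate

lemma ep_eq_stdAddChar (p : ℕ) [NeZero p] (x : ZMod p) : ep p x = ZMod.stdAddChar x := by
  rw [ZMod.stdAddChar_apply, ZMod.toCircle_apply]
  rfl

section Bilinear

variable {𝕜 ι κ : Type*} [RCLike 𝕜] (I : Finset ι) (J : Finset κ) (f : ι → κ → 𝕜)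

lemma norm_sum_sum_mul_le_sum_norm_sum {α : ι → 𝕜} {β : κ → 𝕜} (hβ : ∀ m ∈ J, ‖β m‖ ≤ 1) :
    ‖∑ n ∈ I, ∑ m ∈ J, α n * β m * f n m‖ ≤ ∑ m ∈ J, ‖∑ n ∈ I, α n * f n m‖ := by
  rw [sum_comm]
  refine (norm_sum_le _ _).trans (sum_le_sum fun m hm => ?_)
  calc ‖∑ n ∈ I, α n * β m * f n m‖ = ‖β m‖ * ‖∑ n ∈ I, α n * f n m‖ := by
        rw [← norm_mul, mul_sum]; congr 1; exact sum_congr rfl fun n _ => by ring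
    _ ≤ ‖∑ n ∈ I, α n * f n m‖ := mul_le_of_le_one_left (norm_nonneg _) (hβ m hm)

lemma sum_norm_sum_sq_le {α : ι → 𝕜} (hα : ∀ n ∈ I, ‖α n‖ ≤ 1) :
    ∑ m ∈ J, ‖∑ n ∈ I, α n * f n m‖ ^ 2
      ≤ ∑ n ∈ I, ∑ n' ∈ I, ‖∑ m ∈ J, f n m * conj (f n' m)‖ := by
  have hexpand : ∑ m ∈ J, (∑ n ∈ I, α n * f n m) * conj (∑ n ∈ I, α n * f n m)
      = ∑ n ∈ I, ∑ n' ∈ I, α n * conj (α n') * ∑ m ∈ J, f n m * conj (f n' m) := by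
    simp_rw [map_sum, sum_mul_sum, mul_sum]
    rw [sum_comm]
    refine sum_congr rfl fun n _ => ?_
    rw [sum_comm]
    exact sum_congr rfl fun n' _ => sum_congr rfl fun m _ => by rw [map_mul]; ring
  calc ∑ m ∈ J, ‖∑ n ∈ I, α n * f n m‖ ^ 2
      = ‖∑ m ∈ J, (∑ n ∈ I, α n * f n m) * conj (∑ n ∈ I, α n * f n m)‖ := by
        simp_rw [RCLike.mul_conj, ← RCLike.ofReal_pow, ← RCLike.ofReal_sum, RCLike.norm_ofReal]
        exact (abs_of_nonneg (by positivity)).symm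
    _ = ‖∑ n ∈ I, ∑ n' ∈ I, α n * conj (α n') * ∑ m ∈ J, f n m * conj (f n' m)‖ := by
        rw [hexpand]
    _ ≤ ∑ n ∈ I, ∑ n' ∈ I, ‖α n * conj (α n') * ∑ m ∈ J, f n m * conj (f n' m)‖ :=
        (norm_sum_le _ _).trans (sum_le_sum fun n _ => norm_sum_le _ _)
    _ ≤ ∑ n ∈ I, ∑ n' ∈ I, ‖∑ m ∈ J, f n m * conj (f n' m)‖ := by
        gcongr with n hn n' hn'
        rw [norm_mul, norm_mul, RCLike.norm_conj]
        exact mul_le_of_le_one_left (norm_nonneg _)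
          (mul_le_one₀ (hα n hn) (norm_nonneg _) (hα n' hn'))

lemma norm_sum_sum_mul_sq_le {α : ι → 𝕜} {β : κ → 𝕜} (hα : ∀ n ∈ I, ‖α n‖ ≤ 1)
    (hβ : ∀ m ∈ J, ‖β m‖ ≤ 1) :
    ‖∑ n ∈ I, ∑ m ∈ J, α n * β m * f n m‖ ^ 2
      ≤ #J * ∑ n ∈ I, ∑ n' ∈ I, ‖∑ m ∈ J, f n m * conj (f n' m)‖ :=
  calc ‖∑ n ∈ I, ∑ m ∈ J, α n * β m * f n m‖ ^ 2
      ≤ (∑ m ∈ J, ‖∑ n ∈ I, α n * f n m‖) ^ 2 := by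
        gcongr; exact norm_sum_sum_mul_le_sum_norm_sum I J f hβ
    _ ≤ #J * ∑ m ∈ J, ‖∑ n ∈ I, α n * f n m‖ ^ 2 := sq_sum_le_card_mul_sum_sq
    _ ≤ #J * ∑ n ∈ I, ∑ n' ∈ I, ‖∑ m ∈ J, f n m * conj (f n' m)‖ := by
        gcongr; exact sum_norm_sum_sq_le I J f hα

end Bilinear

section Differences

variable {F : ℤ → ℝ}

lemma sum_Icc_sub_le_sum_Icc (hF : ∀ k, 0 ≤ F k) (u : ℤ) (N : ℕ) {n : ℤ}
    (hn : n ∈ Icc (u + 1) (u + N)) :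
    ∑ n' ∈ Icc (u + 1) (u + N), F (n - n') ≤ ∑ k ∈ Icc (-N : ℤ) N, F k := by
  rw [mem_Icc] at hn
  calc ∑ n' ∈ Icc (u + 1) (u + N), F (n - n') = ∑ k ∈ Icc (n - u - N) (n - u - 1), F k :=
        sum_nbij' (n - ·) (n - ·) (fun _ hk => by rw [mem_Icc] at hk ⊢; omega)
          (fun _ hk => by rw [mem_Icc] at hk ⊢; omega) (fun _ _ => sub_sub_cancel _ _)
          (fun _ _ => sub_sub_cancel _ _) (fun _ _ => rfl)
    _ ≤ ∑ k ∈ Icc (-N : ℤ) N, F k :=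
        sum_le_sum_of_subset_of_nonneg (Icc_subset_Icc (by omega) (by omega)) fun k _ _ => hF k

lemma sum_Icc_neg_le_two_mul (hF : ∀ k, 0 ≤ F k) (hFeven : ∀ k, F (-k) = F k) (b : ℤ) :
    ∑ k ∈ Icc (-b) b, F k ≤ 2 * ∑ k ∈ Icc 0 b, F k := by
  have hneg : ∑ k ∈ Icc (-b) 0, F k = ∑ k ∈ Icc 0 b, F k :=
    sum_nbij' (- ·) (- ·) (fun _ hk => by rw [mem_Icc] at hk ⊢; omega)
      (fun _ hk => by rw [mem_Icc] at hk ⊢; omega) (fun _ _ => neg_neg _)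
      (fun _ _ => neg_neg _) (fun k _ => (hFeven k).symm)
  calc ∑ k ∈ Icc (-b) b, F k ≤ ∑ k ∈ Icc (-b) 0 ∪ Icc 0 b, F k :=
        sum_le_sum_of_subset_of_nonneg (fun k => by simp only [mem_union, mem_Icc]; omega)
          fun k _ _ => hF k
    _ ≤ ∑ k ∈ Icc (-b) 0, F k + ∑ k ∈ Icc 0 b, F k := by
        rw [← sum_union_inter]
        exact le_add_of_nonneg_right (sum_nonneg fun k _ => hF k)
    _ = 2 * ∑ k ∈ Icc 0 b, F k := by rw [hneg, two_mul]

lemma sum_sum_Icc_sub_le (hF : ∀ k, 0 ≤ F k) (hFeven : ∀ k, F (-k) = F k) (u : ℤ) (N : ℕ) :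
    ∑ n ∈ Icc (u + 1) (u + N), ∑ n' ∈ Icc (u + 1) (u + N), F (n - n')
      ≤ 2 * N * ∑ k ∈ Icc (0 : ℤ) N, F k :=
  calc ∑ n ∈ Icc (u + 1) (u + N), ∑ n' ∈ Icc (u + 1) (u + N), F (n - n')
      ≤ ∑ _n ∈ Icc (u + 1) (u + N), ∑ k ∈ Icc (-N : ℤ) N, F k :=
        sum_le_sum fun n hn => sum_Icc_sub_le_sum_Icc hF u N hn
    _ ≤ N * (2 * ∑ k ∈ Icc (0 : ℤ) N, F k) := by
        rw [sum_const, Int.card_Icc, add_sub_add_right_eq_sub, add_sub_cancel_left,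
          Int.toNat_natCast, nsmul_eq_mul]
        gcongr
        exact sum_Icc_neg_le_two_mul hF hFeven N
    _ = 2 * N * ∑ k ∈ Icc (0 : ℤ) N, F k := by ring

end Differences

namespace AddChar

variable {G 𝕜 : Type*} [AddCommGroup G] [Finite G] [RCLike 𝕜] (ψ : AddChar G 𝕜)

lemma map_mul_conj_map (x y : G) : ψ x * conj (ψ y) = ψ (x - y) := by
  rw [← map_neg_eq_conj, ← map_add_eq_mul, sub_eq_add_neg]

lemma norm_sum_map_neg {κ : Type*} (J : Finset κ) (y : κ → G) :
    ‖∑ m ∈ J, ψ (-y m)‖ = ‖∑ m ∈ J, ψ (y m)‖ := by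
  simp_rw [map_neg_eq_conj, ← map_sum, RCLike.norm_conj]

end AddChar

lemma norm_sum_sum_mul_addChar_sq_le {R 𝕜 κ : Type*} [CommRing R] [Finite R] [RCLike 𝕜]
    (ψ : AddChar R 𝕜) (a : R) (x : κ → R) (J : Finset κ) (u : ℤ) (N : ℕ) {α : ℤ → 𝕜}
    {β : κ → 𝕜} (hα : ∀ n ∈ Icc (u + 1) (u + N), ‖α n‖ ≤ 1) (hβ : ∀ m ∈ J, ‖β m‖ ≤ 1) :
    ‖∑ n ∈ Icc (u + 1) (u + N), ∑ m ∈ J, α n * β m * ψ (a * n * x m)‖ ^ 2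
      ≤ 2 * #J * N * ∑ k ∈ Icc (0 : ℤ) N, ‖∑ m ∈ J, ψ (a * k * x m)‖ := by
  set F : ℤ → ℝ := fun k => ‖∑ m ∈ J, ψ (a * k * x m)‖
  have hFeven (k : ℤ) : F (-k) = F k := by
    simp only [F, Int.cast_neg, mul_neg, neg_mul, ψ.norm_sum_map_neg]
  calc _ ≤ #J * ∑ n ∈ Icc (u + 1) (u + N), ∑ n' ∈ Icc (u + 1) (u + N),
          ‖∑ m ∈ J, ψ (a * n * x m) * conj (ψ (a * n' * x m))‖ :=
        norm_sum_sum_mul_sq_le _ _ _ hα hβ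
    _ = #J * ∑ n ∈ Icc (u + 1) (u + N), ∑ n' ∈ Icc (u + 1) (u + N), F (n - n') := by
        simp only [ψ.map_mul_conj_map, F, Int.cast_sub, ← sub_mul, ← mul_sub]
    _ ≤ #J * (2 * N * ∑ k ∈ Icc (0 : ℤ) N, F k) :=
        mul_le_mul_of_nonneg_left
          (sum_sum_Icc_sub_le (F := F) (fun _ => norm_nonneg _) hFeven u N) (Nat.cast_nonneg _)
    _ = 2 * #J * N * ∑ k ∈ Icc (0 : ℤ) N, F k := by ring

/-- reduction of weighted bilinear sums to the unweighted sum via Cauchy–Schwarz: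
`|Σ_{n∈N} Σ_{m∈M} α_n β_m e_p(a n g^m)|² ≤ C·MN·Σ_{0≤n≤N} |Σ_{m∈M} e_p(a n g^m)|`. -/
theorem bilinear_reduction :
    ∃ C : ℝ, 0 < C ∧
      ∀ (p : ℕ), p.Prime → ∀ (g : (ZMod p)ˣ) (a : ZMod p), a ≠ 0 →
        ∀ (u v : ℤ) (N M : ℕ), N ≤ p → M ≤ orderOf g →
        ∀ (α β : ℤ → ℂ),
          (∀ n ∈ Finset.Icc (u + 1) (u + (N : ℤ)), norm (α n) ≤ 1) →
          (∀ m ∈ Finset.Icc (v + 1) (v + (M : ℤ)), norm (β m) ≤ 1) →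
          (norm (∑ n ∈ Finset.Icc (u + 1) (u + (N : ℤ)),
              ∑ m ∈ Finset.Icc (v + 1) (v + (M : ℤ)),
                α n * β m * ep p (a * (n : ZMod p) * ((g ^ m : (ZMod p)ˣ) : ZMod p)))) ^ 2
            ≤ C * M * N *
              ∑ n ∈ Finset.Icc (0 : ℤ) (N : ℤ),
                norm (∑ m ∈ Finset.Icc (v + 1) (v + (M : ℤ)),
                  ep p (a * (n : ZMod p) * ((g ^ m : (ZMod p)ˣ) : ZMod p))) := by
  refine ⟨2, two_pos, fun p hp g a _ u v N M _ _ α β hα hβ => ?_⟩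
  have : NeZero p := ⟨hp.ne_zero⟩
  simpa [ep_eq_stdAddChar] using
    norm_sum_sum_mul_addChar_sq_le ZMod.stdAddChar a (fun m => ((g ^ m : (ZMod p)ˣ) : ZMod p))
      (Icc (v + 1) (v + M)) u N hα hβ
end
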